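/- arXiv:2412.02188 — 6 statements merged into one kernel-verified Lean document; each statement's English description precedes it below -/
import Mathlib

section
/- Let X be an infinite Hausdorff linearly ordered topological space. Then the network weight of Q_P(X), the weight of Q_P(X), and the cardinality of X all coincide: nw(Q_P(X)) = w(Q_P(X)) = |X|. -/
open Cardinal

universe u v w

/-- A function between topological spaces is quasi-continuous if for every point `x` and
all open sets `U ∋ x` and `V ∋ f x` there is a nonempty open `G ⊆ U` with `f '' G ⊆ V`. -/
def QuasiContinuous {X Y : Type*} [TopologicalSpace X] [TopologicalSpace Y] (f : X → Y) : Prop :=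
  ∀ x : X, ∀ U : Set X, IsOpen U → x ∈ U → ∀ V : Set Y, IsOpen V → f x ∈ V →
    ∃ G : Set X, IsOpen G ∧ G.Nonempty ∧ G ⊆ U ∧ f '' G ⊆ V

/-- `QP X Y` : the quasi-continuous functions from `X` to `Y`, topologized as a subspace of
the product topology on `X → Y` (topology of pointwise convergence). -/
abbrev QP (X Y : Type*) [TopologicalSpace X] [TopologicalSpace Y] :=
  {f : X → Y // QuasiContinuous f}

/-- `CP X Y` : the continuous functions from `X` to `Y` with the topology of
pointwise convergence. -/
abbrev CP (X Y : Type*) [TopologicalSpace X] [TopologicalSpace Y] :=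
  {f : X → Y // Continuous f}

/-- The weight of a topological space: `ℵ₀ +` the least cardinality of a basis. -/
noncomputable def weight (Z : Type u) [TopologicalSpace Z] : Cardinal.{u} :=
  ℵ₀ + sInf {c | ∃ B : Set (Set Z), TopologicalSpace.IsTopologicalBasis B ∧ #B = c}

/-- A network of a space: a family of (arbitrary) subsets such that every open `U ∋ z`
contains some member of the family containing `z`. -/
def IsNetwork {Z : Type u} [TopologicalSpace Z] (N : Set (Set Z)) : Prop :=
  ∀ z : Z, ∀ U : Set Z, IsOpen U → z ∈ U → ∃ A ∈ N, z ∈ A ∧ A ⊆ U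

/-- Network weight: `ℵ₀ +` the least cardinality of a network. -/
noncomputable def netWeight (Z : Type u) [TopologicalSpace Z] : Cardinal.{u} :=
  ℵ₀ + sInf {c | ∃ N : Set (Set Z), IsNetwork N ∧ #N = c}

/-- Density: `ℵ₀ +` the least cardinality of a dense subset. -/
noncomputable def density (Z : Type u) [TopologicalSpace Z] : Cardinal.{u} :=
  ℵ₀ + sInf {c | ∃ D : Set Z, Dense D ∧ #D = c}

/-- Lindelöf degree: `ℵ₀ +` the least cardinal `η` such that every open cover has a
subcover of cardinality at most `η`. -/
noncomputable def lindelofDegree (X : Type u) [TopologicalSpace X] : Cardinal.{u} :=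
  ℵ₀ + sInf {η | ∀ V : Set (Set X), (∀ U ∈ V, IsOpen U) → ⋃₀ V = Set.univ →
      ∃ W ⊆ V, #W ≤ η ∧ ⋃₀ W = Set.univ}

/-- Tightness: `ℵ₀ +` the least cardinal `η` such that whenever `z ∈ closure A` there is
`B ⊆ A` with `#B ≤ η` and `z ∈ closure B`. -/
noncomputable def tightness (Z : Type u) [TopologicalSpace Z] : Cardinal.{u} :=
  ℵ₀ + sInf {η | ∀ z : Z, ∀ A : Set Z, z ∈ closure A →
      ∃ B ⊆ A, #B ≤ η ∧ z ∈ closure B}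

/-- Pseudocharacter of a space: the sup over points `z` of `ℵ₀ +` the least cardinality of a
family of open sets whose intersection is `{z}`. -/
noncomputable def pseudoChar (Z : Type u) [TopologicalSpace Z] : Cardinal.{u} :=
  ⨆ z : Z, (ℵ₀ + sInf {c | ∃ γ : Set (Set Z), (∀ U ∈ γ, IsOpen U) ∧ ⋂₀ γ = {z} ∧ #γ = c})

/-- Weak covering number: `ℵ₀ +` the least cardinality of a family of open sets whose union
is dense. -/
noncomputable def weakCov (X : Type u) [TopologicalSpace X] : Cardinal.{u} :=
  ℵ₀ + sInf {c | ∃ J : Set (Set X), (∀ U ∈ J, IsOpen U) ∧ closure (⋃₀ J) = Set.univ ∧ #J = c}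

/-- Cardinal logarithm: the least `μ` with `κ ≤ 2 ^ μ`. -/
noncomputable def cardLog (κ : Cardinal.{u}) : Cardinal.{u} :=
  sInf {μ | κ ≤ 2 ^ μ}

/-- i-weight: `ℵ₀ +` the least weight of a space onto which `Z` admits a continuous
bijection. -/
noncomputable def iWeight (Z : Type u) [TopologicalSpace Z] : Cardinal.{u} :=
  ℵ₀ + sInf {c | ∃ (W : Type u) (_ : TopologicalSpace W) (f : Z → W),
      Continuous f ∧ Function.Bijective f ∧ weight W = c}


section Aux

open Set Topology TopologicalSpace

/-- A basis is a network, so `netWeight ≤ weight`. -/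
lemma netWeight_le_weight (Z : Type u) [TopologicalSpace Z] : netWeight Z ≤ weight Z := by
  unfold netWeight weight
  apply add_le_add_right
  apply csInf_le_csInf (OrderBot.bddBelow _)
  · exact ⟨_, {U : Set Z | IsOpen U}, isTopologicalBasis_opens, rfl⟩
  · rintro c ⟨B, hB, rfl⟩
    refine ⟨B, fun z U hU hz => ?_, rfl⟩
    obtain ⟨v, hv, hzv, hvU⟩ := hB.exists_subset_of_mem_open hz hU
    exact ⟨v, hv, hzv, hvU⟩

variable {X : Type u} [LinearOrder X] [TopologicalSpace X]

/-- The constant zero function is quasi-continuous. -/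
lemma qc_const_zero : QuasiContinuous (fun _ : X => (0 : ℝ)) := by
  intro z U hU hz V _ hV0
  exact ⟨U, hU, ⟨z, hz⟩, subset_rfl, by rintro v ⟨w, _, rfl⟩; exact hV0⟩

/-- The indicator of an isolated point is quasi-continuous (assuming T1). -/
lemma qc_singleton [T2Space X] (x : X) (hx : IsOpen ({x} : Set X)) :
    QuasiContinuous (fun y : X => if y = x then (1 : ℝ) else 0) := by
  intro z U hU hzU V hV hzV
  by_cases h : z = x
  · subst h
    refine ⟨{z}, hx, ⟨z, rfl⟩, Set.singleton_subset_iff.mpr hzU, ?_⟩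
    rintro v ⟨w, hw, rfl⟩
    rcases hw with rfl
    exact hzV
  · refine ⟨U ∩ {x}ᶜ, hU.inter isClosed_singleton.isOpen_compl, ⟨z, hzU, h⟩,
      Set.inter_subset_left, ?_⟩
    rintro v ⟨w, ⟨_, hw⟩, rfl⟩
    simp only [Set.mem_compl_iff, Set.mem_singleton_iff] at hw
    simp only [if_neg hw]
    simpa only [if_neg h] using hzV

variable [OrderTopology X]

/-- The indicator of `Ici x` is quasi-continuous when `x` is a limit from the right. -/
lemma qc_ici (x : X) (hx : x ∈ closure (Set.Ioi x)) :
    QuasiContinuous (fun y : X => if x ≤ y then (1 : ℝ) else 0) := by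
  intro z U hU hzU V hV hzV
  rcases lt_trichotomy z x with h | h | h
  · refine ⟨U ∩ Set.Iio x, hU.inter isOpen_Iio, ⟨z, hzU, h⟩, Set.inter_subset_left, ?_⟩
    rintro v ⟨w, ⟨_, hw⟩, rfl⟩
    simp only [if_neg (not_le.mpr hw)]
    simpa only [if_neg (not_le.mpr h)] using hzV
  · subst h
    refine ⟨U ∩ Set.Ioi z, hU.inter isOpen_Ioi, mem_closure_iff.mp hx U hU hzU,
      Set.inter_subset_left, ?_⟩
    rintro v ⟨w, ⟨_, hw⟩, rfl⟩
    simp only [if_pos (le_of_lt hw)]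
    simpa only [if_pos (le_refl z)] using hzV
  · refine ⟨U ∩ Set.Ioi x, hU.inter isOpen_Ioi, ⟨z, hzU, h⟩, Set.inter_subset_left, ?_⟩
    rintro v ⟨w, ⟨_, hw⟩, rfl⟩
    simp only [if_pos (le_of_lt hw)]
    simpa only [if_pos (le_of_lt h)] using hzV

/-- The indicator of `Iic x` is quasi-continuous when `x` is a limit from the left. -/
lemma qc_iic (x : X) (hx : x ∈ closure (Set.Iio x)) :
    QuasiContinuous (fun y : X => if y ≤ x then (1 : ℝ) else 0) := by
  intro z U hU hzU V hV hzV
  rcases lt_trichotomy x z with h | h | h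
  · refine ⟨U ∩ Set.Ioi x, hU.inter isOpen_Ioi, ⟨z, hzU, h⟩, Set.inter_subset_left, ?_⟩
    rintro v ⟨w, ⟨_, hw⟩, rfl⟩
    simp only [if_neg (not_le.mpr hw)]
    simpa only [if_neg (not_le.mpr h)] using hzV
  · subst h
    refine ⟨U ∩ Set.Iio x, hU.inter isOpen_Iio, mem_closure_iff.mp hx U hU hzU,
      Set.inter_subset_left, ?_⟩
    rintro v ⟨w, ⟨_, hw⟩, rfl⟩
    simp only [if_pos (le_of_lt hw)]
    simpa only [if_pos (le_refl x)] using hzV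
  · refine ⟨U ∩ Set.Iio x, hU.inter isOpen_Iio, ⟨z, hzU, h⟩, Set.inter_subset_left, ?_⟩
    rintro v ⟨w, ⟨_, hw⟩, rfl⟩
    simp only [if_pos (le_of_lt hw)]
    simpa only [if_pos (le_of_lt h)] using hzV

/-- Every point is isolated, a limit from the right, or a limit from the left. -/
lemma cover_cases (x : X) :
    IsOpen ({x} : Set X) ∨ x ∈ closure (Set.Ioi x) ∨ x ∈ closure (Set.Iio x) := by
  by_cases h2 : x ∈ closure (Set.Ioi x)
  · exact Or.inr (Or.inl h2)
  by_cases h3 : x ∈ closure (Set.Iio x)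
  · exact Or.inr (Or.inr h3)
  left
  have key : ({x} : Set X) = (closure (Set.Ioi x) ∪ closure (Set.Iio x))ᶜ := by
    apply Set.eq_of_subset_of_subset
    · rintro y rfl
      simp only [Set.mem_compl_iff, Set.mem_union]
      tauto
    · intro y hy
      simp only [Set.mem_compl_iff, Set.mem_union, not_or] at hy
      have hy1 : y ∉ Set.Ioi x := fun h => hy.1 (subset_closure h)
      have hy2 : y ∉ Set.Iio x := fun h => hy.2 (subset_closure h)
      simp only [Set.mem_Ioi, Set.mem_Iio, not_lt] at hy1 hy2
      exact le_antisymm hy1 hy2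
  rw [key]
  exact (isClosed_closure.union isClosed_closure).isOpen_compl

/-- The key injection: a family separating points forces networks to be large. -/
lemma mk_le_of_network (S : Set X) (f : X → QP X ℝ)
    (h1 : ∀ x ∈ S, (f x).1 x > 1 / 2)
    (h2 : ∀ x ∈ S, ∀ y ∈ S, (f x).1 y > 1 / 2 → (f y).1 x > 1 / 2 → x = y)
    (N : Set (Set (QP X ℝ))) (hN : IsNetwork N) : #S ≤ #N := by
  have hop : ∀ x : X, IsOpen {g : QP X ℝ | g.1 x > 1 / 2} := by
    intro x
    have hc : Continuous fun g : QP X ℝ => g.1 x :=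
      (continuous_apply x).comp continuous_subtype_val
    exact isOpen_lt continuous_const hc
  have key : ∀ x : S, ∃ A : Set (QP X ℝ),
      A ∈ N ∧ f x ∈ A ∧ A ⊆ {g : QP X ℝ | g.1 x > 1 / 2} := by
    rintro ⟨x, hx⟩
    obtain ⟨A, hAN, hfA, hAs⟩ := hN (f x) _ (hop x) (h1 x hx)
    exact ⟨A, hAN, hfA, hAs⟩
  choose A hAN hfA hAs using key
  have hinj : Function.Injective fun x : S => (⟨A x, hAN x⟩ : N) := by
    intro a b hab
    have h : A a = A b := congrArg Subtype.val hab
    have hb : (f (b : X)).1 (a : X) > 1 / 2 := hAs a (h ▸ hfA b)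
    have ha : (f (a : X)).1 (b : X) > 1 / 2 := hAs b (h.symm ▸ hfA a)
    exact Subtype.ext (h2 a a.2 b b.2 ha hb)
  exact Cardinal.mk_le_of_injective hinj

end Aux

section Upper

open Set Topology TopologicalSpace

/-- Upper bound: the weight of `Q_P(X)` is at most `|X|`. -/
lemma weight_QP_le (X : Type u) [TopologicalSpace X] [Infinite X] :
    weight (QP X ℝ) ≤ #X := by
  classical
  set BR : Set (Set ℝ) := ⋃ (a : ℚ) (b : ℚ) (_ : a < b), {Set.Ioo (a : ℝ) b} with hBRdef
  have hBR : IsTopologicalBasis BR := Real.isTopologicalBasis_Ioo_rat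
  set BP : Set (Set (X → ℝ)) := { S | ∃ (U : X → Set ℝ) (F : Finset X),
      (∀ i, i ∈ F → U i ∈ BR) ∧ S = (F : Set X).pi U } with hBPdef
  have hBP : IsTopologicalBasis BP := isTopologicalBasis_pi fun _ => hBR
  have hBQ : IsTopologicalBasis
      ((Set.preimage (Subtype.val : QP X ℝ → (X → ℝ))) '' BP) :=
    hBP.isInducing Topology.IsEmbedding.subtypeVal.toIsInducing
  have hcard : #BP ≤ #X := by
    set g : (Σ F : Finset X, ({ i // i ∈ F } → ℚ × ℚ)) → Set (X → ℝ) := fun p =>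
      (p.1 : Set X).pi fun i =>
        if h : i ∈ p.1 then Set.Ioo ((p.2 ⟨i, h⟩).1 : ℝ) ((p.2 ⟨i, h⟩).2 : ℝ)
        else Set.univ with hgdef
    have hsub : BP ⊆ Set.range g := by
      rintro S ⟨U, F, hU, rfl⟩
      have hex : ∀ i, i ∈ F → ∃ q : ℚ × ℚ, U i = Set.Ioo (q.1 : ℝ) (q.2 : ℝ) := by
        intro i hi
        have := hU i hi
        rw [hBRdef] at this
        simp only [Set.mem_iUnion, Set.mem_singleton_iff] at this
        obtain ⟨a, b, _, hab⟩ := this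
        exact ⟨(a, b), hab⟩
      choose q hq using hex
      refine ⟨⟨F, fun i => q i.1 i.2⟩, ?_⟩
      rw [hgdef]
      refine Set.pi_congr rfl ?_
      intro i hi
      have hm : i ∈ F := hi
      dsimp only
      rw [dif_pos hm, hq i hm]
    have h1 : #BP ≤ #(Σ F : Finset X, ({ i // i ∈ F } → ℚ × ℚ)) :=
      (Cardinal.mk_le_mk_of_subset hsub).trans Cardinal.mk_range_le
    refine h1.trans ?_
    rw [Cardinal.mk_sigma]
    have h2 : (Cardinal.sum fun F : Finset X => #({ i // i ∈ F } → ℚ × ℚ)) ≤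
        Cardinal.sum fun _ : Finset X => (ℵ₀ : Cardinal.{u}) :=
      Cardinal.sum_le_sum _ _ fun F => Cardinal.mk_le_aleph0
    refine h2.trans ?_
    rw [Cardinal.sum_const', Cardinal.mk_finset_of_infinite]
    exact le_of_eq (Cardinal.mul_aleph0_eq (Cardinal.aleph0_le_mk X))
  have hmem : #((Set.preimage (Subtype.val : QP X ℝ → (X → ℝ))) '' BP) ∈
      {c | ∃ B : Set (Set (QP X ℝ)), IsTopologicalBasis B ∧ #B = c} := ⟨_, hBQ, rfl⟩
  unfold weight
  calc ℵ₀ + sInf {c | ∃ B : Set (Set (QP X ℝ)), IsTopologicalBasis B ∧ #B = c}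
      ≤ ℵ₀ + #((Set.preimage (Subtype.val : QP X ℝ → (X → ℝ))) '' BP) :=
        add_le_add_right (csInf_le' hmem) _
    _ ≤ ℵ₀ + #X := add_le_add_right (Cardinal.mk_image_le.trans hcard) _
    _ = #X := Cardinal.add_eq_right (Cardinal.aleph0_le_mk X) (Cardinal.aleph0_le_mk X)

end Upper

section Lower

open Set

/-- Lower bound: `|X| ≤ nw(Q_P(X))`. -/
lemma mk_le_netWeight_QP (X : Type u) [LinearOrder X] [TopologicalSpace X] [OrderTopology X]
    [T2Space X] [Infinite X] : #X ≤ netWeight (QP X ℝ) := by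
  classical
  set T : Set (Cardinal.{u}) :=
    {c | ∃ N : Set (Set (QP X ℝ)), IsNetwork N ∧ #N = c} with hTdef
  have hTne : T.Nonempty := by
    refine ⟨#(Set.range fun z : QP X ℝ => ({z} : Set (QP X ℝ))), _, ?_, rfl⟩
    intro z U hU hz
    exact ⟨{z}, ⟨z, rfl⟩, rfl, Set.singleton_subset_iff.mpr hz⟩
  obtain ⟨N, hN, hNc⟩ : ∃ N : Set (Set (QP X ℝ)), IsNetwork N ∧ #N = sInf T :=
    csInf_mem hTne
  set m : Cardinal.{u} := sInf T with hmdef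
  -- three families
  set czero : QP X ℝ := ⟨fun _ => 0, qc_const_zero⟩ with hczero
  set S1 : Set X := {x | IsOpen ({x} : Set X)} with hS1
  set S2 : Set X := {x | x ∈ closure (Set.Ioi x)} with hS2
  set S3 : Set X := {x | x ∈ closure (Set.Iio x)} with hS3
  have hb1 : #S1 ≤ #N := by
    set f : X → QP X ℝ := fun x =>
      if h : IsOpen ({x} : Set X) then
        ⟨fun y => if y = x then (1 : ℝ) else 0, qc_singleton x h⟩
      else czero with hf
    refine mk_le_of_network S1 f ?_ ?_ N hN
    · intro x hx
      have hx' : IsOpen ({x} : Set X) := hx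
      simp only [hf, dif_pos hx', if_pos rfl]
      norm_num
    · intro x hx y hy hxy hyx
      have hx' : IsOpen ({x} : Set X) := hx
      simp only [hf, dif_pos hx'] at hxy
      by_cases h : y = x
      · exact h.symm
      · simp only [if_neg h] at hxy; norm_num at hxy
  have hb2 : #S2 ≤ #N := by
    set f : X → QP X ℝ := fun x =>
      if h : x ∈ closure (Set.Ioi x) then
        ⟨fun y => if x ≤ y then (1 : ℝ) else 0, qc_ici x h⟩
      else czero with hf
    refine mk_le_of_network S2 f ?_ ?_ N hN
    · intro x hx
      have hx' : x ∈ closure (Set.Ioi x) := hx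
      simp only [hf, dif_pos hx', if_pos (le_refl x)]
      norm_num
    · intro x hx y hy hxy hyx
      have hx' : x ∈ closure (Set.Ioi x) := hx
      have hy' : y ∈ closure (Set.Ioi y) := hy
      simp only [hf, dif_pos hx'] at hxy
      simp only [hf, dif_pos hy'] at hyx
      by_cases h : x ≤ y
      · by_cases h' : y ≤ x
        · exact le_antisymm h h'
        · simp only [if_neg h'] at hyx; norm_num at hyx
      · simp only [if_neg h] at hxy; norm_num at hxy
  have hb3 : #S3 ≤ #N := by
    set f : X → QP X ℝ := fun x =>
      if h : x ∈ closure (Set.Iio x) then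
        ⟨fun y => if y ≤ x then (1 : ℝ) else 0, qc_iic x h⟩
      else czero with hf
    refine mk_le_of_network S3 f ?_ ?_ N hN
    · intro x hx
      have hx' : x ∈ closure (Set.Iio x) := hx
      simp only [hf, dif_pos hx', if_pos (le_refl x)]
      norm_num
    · intro x hx y hy hxy hyx
      have hx' : x ∈ closure (Set.Iio x) := hx
      have hy' : y ∈ closure (Set.Iio y) := hy
      simp only [hf, dif_pos hx'] at hxy
      simp only [hf, dif_pos hy'] at hyx
      by_cases h : y ≤ x
      · by_cases h' : x ≤ y
        · exact le_antisymm h' h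
        · simp only [if_neg h'] at hyx; norm_num at hyx
      · simp only [if_neg h] at hxy; norm_num at hxy
  have hcover : (Set.univ : Set X) ⊆ S1 ∪ (S2 ∪ S3) := by
    intro x _
    rcases cover_cases x with h | h | h
    · exact Or.inl h
    · exact Or.inr (Or.inl h)
    · exact Or.inr (Or.inr h)
  have hXle : #X ≤ #S1 + (#S2 + #S3) := by
    calc #X = #(Set.univ : Set X) := Cardinal.mk_univ.symm
      _ ≤ #(S1 ∪ (S2 ∪ S3) : Set X) := Cardinal.mk_le_mk_of_subset hcover
      _ ≤ #S1 + #(S2 ∪ S3 : Set X) := Cardinal.mk_union_le _ _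
      _ ≤ #S1 + (#S2 + #S3) := add_le_add_right (Cardinal.mk_union_le _ _) _
  have hXm : #X ≤ m + (m + m) :=
    hXle.trans (add_le_add (hb1.trans hNc.le)
      (add_le_add (hb2.trans hNc.le) (hb3.trans hNc.le)))
  have hfinal : m + (m + m) ≤ ℵ₀ + m := by
    rcases lt_or_ge m ℵ₀ with hm | hm
    · have : m + (m + m) < ℵ₀ :=
        Cardinal.add_lt_aleph0 hm (Cardinal.add_lt_aleph0 hm hm)
      exact this.le.trans (self_le_add_right _ _)
    · rw [Cardinal.add_eq_self hm, Cardinal.add_eq_self hm]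
      exact self_le_add_left _ _
  unfold netWeight
  exact hXm.trans hfinal

end Lower


/-- For an infinite Hausdorff linearly ordered topological space `X`,
`nw(Q_P(X)) = w(Q_P(X)) = |X|`. -/
theorem stmt0 (X : Type u) [LinearOrder X] [TopologicalSpace X] [OrderTopology X]
    [T2Space X] [Infinite X] :
    netWeight (QP X ℝ) = weight (QP X ℝ) ∧ weight (QP X ℝ) = #X := by
  have h1 : netWeight (QP X ℝ) ≤ weight (QP X ℝ) := netWeight_le_weight _
  have h2 : weight (QP X ℝ) ≤ #X := weight_QP_le X
  have h3 : #X ≤ netWeight (QP X ℝ) := mk_le_netWeight_QP X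
  exact ⟨le_antisymm h1 (h2.trans h3), le_antisymm h2 (h3.trans h1)⟩
end

section
/- Let X be a regular topological space. If the tightness of Q_P(X) is countable, i.e. t(Q_P(X)) = ℵ₀, then X is a Lindelöf space (every open cover of X has a countable subcover). -/
/-!
For an open cover `𝒱` of a regular space `X`, let `A` be the set of quasi-continuous functions
that equal `1` outside the union of finitely many members of `𝒱`. The zero function lies in the
closure of `A`: given finitely many points, shrink by regularity to open sets `W` with closures
inside members of `𝒱`, and take the indicator of the complement of the closure of `⋃ W`, which is
quasi-continuous. Countable tightness yields a countable `B ⊆ A` with `0 ∈ closure B`, and then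
the finite subfamilies attached to the members of `B` together cover `X`, since every point `x`
has some `g ∈ B` with `g x < 1`.
-/


open Cardinal

universe u v w

open Set Topology

section QuasiContinuous

variable {X Y : Type*} [TopologicalSpace X] [TopologicalSpace Y]

theorem quasiContinuous_const (c : Y) : QuasiContinuous fun _ : X => c := by
  rintro x U hU hxU V - hcV
  exact ⟨U, hU, ⟨x, hxU⟩, subset_rfl, by rintro _ ⟨_, -, rfl⟩; exact hcV⟩

theorem quasiContinuous_indicator_compl_closure [Zero Y] {W : Set X} (hW : IsOpen W) (c : Y) :
    QuasiContinuous ((closure W)ᶜ.indicator fun _ => c) := by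
  intro x U hU hxU V _ hxV
  by_cases hx : x ∈ closure W
  · refine ⟨U ∩ W, hU.inter hW, mem_closure_iff.mp hx U hU hxU, inter_subset_left, ?_⟩
    rintro _ ⟨y, ⟨-, hy⟩, rfl⟩
    have hy : y ∈ closure W := subset_closure hy
    simp_all
  · refine ⟨U ∩ (closure W)ᶜ, hU.inter isClosed_closure.isOpen_compl, ⟨x, hxU, hx⟩,
      inter_subset_left, ?_⟩
    rintro _ ⟨y, ⟨-, hy⟩, rfl⟩
    simp_all

end QuasiContinuous

theorem Subtype.mem_closure_of_forall_finset_exists_eqOn {ι Y : Type*} [TopologicalSpace Y]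
    {p : (ι → Y) → Prop} {z : Subtype p} {A : Set (Subtype p)}
    (h : ∀ I : Finset ι, ∃ g ∈ A, ∀ i ∈ I, g.1 i = z.1 i) : z ∈ closure A := by
  rw [mem_closure_iff]
  intro O hO hzO
  obtain ⟨O', hO', rfl⟩ := isOpen_induced_iff.mp hO
  obtain ⟨I, u, hu, hsub⟩ := isOpen_pi_iff.mp hO' z.1 hzO
  obtain ⟨g, hgA, hg⟩ := h I
  exact ⟨g, hsub fun i hi => (hg i hi).symm ▸ (hu i hi).2, hgA⟩

theorem exists_countable_subset_mem_closure_of_tightness_le {Z : Type u} [TopologicalSpace Z]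
    (h : tightness Z ≤ ℵ₀) {z : Z} {A : Set Z} (hz : z ∈ closure A) :
    ∃ B ⊆ A, B.Countable ∧ z ∈ closure B := by
  set S : Set Cardinal.{u} :=
    {η | ∀ z : Z, ∀ A : Set Z, z ∈ closure A → ∃ B ⊆ A, #B ≤ η ∧ z ∈ closure B}
  have hS : S.Nonempty := ⟨#Z, fun z A hz => ⟨A, subset_rfl, mk_set_le A, hz⟩⟩
  have hSle : sInf S ≤ ℵ₀ := (self_le_add_left _ _).trans h
  obtain ⟨B, hBA, hB, hzB⟩ := csInf_mem hS z A hz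
  exact ⟨B, hBA, countable_coe_iff.mp (mk_le_aleph0_iff.mp (hB.trans hSle)), hzB⟩

section Cover

variable {X : Type u} [TopologicalSpace X]

def oneOutsideFiniteSubfamily (𝒱 : Set (Set X)) : Set (QP X ℝ) :=
  {f | ∃ I ⊆ 𝒱, I.Finite ∧ ∀ x ∉ ⋃₀ I, f.1 x = 1}

theorem exists_mem_oneOutsideFiniteSubfamily_eqOn_zero [RegularSpace X] {𝒱 : Set (Set X)}
    (hopen : ∀ U ∈ 𝒱, IsOpen U) (hcov : ⋃₀ 𝒱 = Set.univ) (F : Finset X) :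
    ∃ f ∈ oneOutsideFiniteSubfamily 𝒱, ∀ x ∈ F, f.1 x = 0 := by
  have hpt : ∀ x : X, ∃ V ∈ 𝒱, ∃ t ∈ 𝓝 x, IsClosed t ∧ t ⊆ V := by
    intro x
    obtain ⟨V, hV, hxV⟩ := hcov ▸ mem_univ x
    exact ⟨V, hV, exists_mem_nhds_isClosed_subset ((hopen V hV).mem_nhds hxV)⟩
  choose V hV t ht htc htV using hpt
  set W := ⋃ x ∈ F, interior (t x)
  have hWcl : closure W ⊆ ⋃ x ∈ F, t x :=
    closure_minimal (iUnion₂_mono fun x _ => interior_subset)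
      (F.finite_toSet.isClosed_biUnion fun x _ => htc x)
  have hWo : IsOpen W := isOpen_biUnion fun x _ => isOpen_interior
  refine ⟨⟨_, quasiContinuous_indicator_compl_closure hWo (1 : ℝ)⟩,
    ⟨V '' F, ?_, F.finite_toSet.image V, ?_⟩, ?_⟩
  · exact image_subset_iff.mpr fun x _ => hV x
  · intro x hx
    have hxW : x ∉ closure W := fun hxW => by
      obtain ⟨y, hyF, hxy⟩ := mem_iUnion₂.mp (hWcl hxW)
      exact hx ⟨V y, mem_image_of_mem V hyF, htV y hxy⟩
    exact indicator_of_mem (mem_compl hxW) fun _ => (1 : ℝ)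
  · intro x hx
    have hxW : x ∈ closure W :=
      subset_closure (mem_iUnion₂.mpr ⟨x, hx, mem_interior_iff_mem_nhds.mpr (ht x)⟩)
    exact indicator_of_notMem (notMem_compl_iff.mpr hxW) fun _ => (1 : ℝ)

theorem exists_countable_subcover_of_zero_mem_closure {𝒱 : Set (Set X)}
    {B : Set (QP X ℝ)} (hBA : B ⊆ oneOutsideFiniteSubfamily 𝒱) (hBc : B.Countable)
    (hzB : ⟨fun _ => 0, quasiContinuous_const 0⟩ ∈ closure B) :
    ∃ W ⊆ 𝒱, W.Countable ∧ ⋃₀ W = Set.univ := by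
  choose! I hI𝒱 hIfin hIone using fun g (hg : g ∈ B) => hBA hg
  refine ⟨⋃ g ∈ B, I g, iUnion₂_subset hI𝒱, hBc.biUnion fun g hg => (hIfin g hg).countable,
    eq_univ_of_forall fun x => ?_⟩
  have hO : IsOpen {f : QP X ℝ | f.1 x < 1} :=
    isOpen_lt ((continuous_apply x).comp continuous_subtype_val) continuous_const
  obtain ⟨g, hgx, hgB⟩ := mem_closure_iff.mp hzB _ hO (by simp)
  by_cases hx : x ∈ ⋃₀ I g
  · obtain ⟨s, hs, hxs⟩ := hx
    exact ⟨s, mem_iUnion₂.mpr ⟨g, hgB, hs⟩, hxs⟩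
  · exact absurd (hIone g hgB x hx) (ne_of_lt hgx)

end Cover

/-- For a regular space `X`, if `t(Q_P(X)) = ℵ₀` then `X` is Lindelöf:
every open cover has a countable subcover. -/
theorem stmt2 (X : Type u) [TopologicalSpace X] [RegularSpace X]
    (h : tightness (QP X ℝ) = ℵ₀) :
    ∀ V : Set (Set X), (∀ U ∈ V, IsOpen U) → ⋃₀ V = Set.univ →
      ∃ W ⊆ V, W.Countable ∧ ⋃₀ W = Set.univ := by
  intro 𝒱 hopen hcov
  have hzA : (⟨fun _ => 0, quasiContinuous_const 0⟩ : QP X ℝ) ∈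
      closure (oneOutsideFiniteSubfamily 𝒱) :=
    Subtype.mem_closure_of_forall_finset_exists_eqOn
      (exists_mem_oneOutsideFiniteSubfamily_eqOn_zero hopen hcov)
  obtain ⟨B, hBA, hBc, hzB⟩ := exists_countable_subset_mem_closure_of_tightness_le h.le hzA
  exact exists_countable_subcover_of_zero_mem_closure hBA hBc hzB
end

section
/- Let X be a regular topological space and Y a metric space with at least two points. Then the density of X is at most the network weight of Q_P(X,Y): d(X) ≤ nw(Q_P(X,Y)). -/
open Cardinal

universe u v w

open Classical in
/-- The indicator of the closure of an open set is quasi-continuous. -/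
lemma quasiContinuous_indicator_closure {X Y : Type*} [TopologicalSpace X]
    [TopologicalSpace Y] (W : Set X) (hW : IsOpen W) (y₀ y₁ : Y) :
    QuasiContinuous (fun z => if z ∈ closure W then y₁ else y₀) := by
  intro x U hU hxU V hV hfx
  by_cases hx : x ∈ closure W
  · simp only [if_pos hx] at hfx
    refine ⟨U ∩ W, hU.inter hW, mem_closure_iff.mp hx U hU hxU,
      Set.inter_subset_left, ?_⟩
    rintro y ⟨z, ⟨-, hzW⟩, rfl⟩
    simpa only [if_pos (subset_closure hzW)] using hfx
  · simp only [if_neg hx] at hfx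
    refine ⟨U ∩ (closure W)ᶜ, hU.inter isClosed_closure.isOpen_compl,
      ⟨x, hxU, hx⟩, Set.inter_subset_left, ?_⟩
    rintro y ⟨z, ⟨-, hz⟩, rfl⟩
    simpa only [if_neg hz] using hfx

open Classical in
/-- For a regular space `X` and a metric space `Y` with at least two points,
`d(X) ≤ nw(Q_P(X,Y))`. -/
theorem stmt7 (X : Type u) (Y : Type v) [TopologicalSpace X] [RegularSpace X]
    [MetricSpace Y] [Nontrivial Y] :
    Cardinal.lift.{v} (density X) ≤ netWeight (QP X Y) := by
  obtain ⟨y₀, y₁, hne⟩ := exists_pair_ne Y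
  set ε : ℝ := dist y₀ y₁ with hε
  have hεpos : 0 < ε := dist_pos.mpr hne
  -- the set of cardinalities of networks is nonempty
  have hSne : {c | ∃ N : Set (Set (QP X Y)), IsNetwork N ∧ #N = c}.Nonempty := by
    refine ⟨#(Set.univ : Set (Set (QP X Y))), Set.univ, ?_, rfl⟩
    exact fun z U hU hz => ⟨U, trivial, hz, subset_rfl⟩
  -- get a network realizing the infimum
  obtain ⟨N, hN, hNcard⟩ := csInf_mem hSne
  -- P A : the set of points where all members of A are ε-close to y₁
  set P : Set (QP X Y) → Set X := fun A => {x | ∀ g ∈ A, dist (g.1 x) y₁ < ε} with hP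
  set N' : Set (Set (QP X Y)) := {A | A ∈ N ∧ (P A).Nonempty} with hN'
  set xN : N' → X := fun A => A.2.2.some with hxN
  set D : Set X := Set.range xN with hD
  -- D is dense
  have hDdense : Dense D := by
    rw [dense_iff_inter_open]
    intro U hU ⟨x, hxU⟩
    -- regularity: closed nbhd inside U
    obtain ⟨t, htmem, htcl, htU⟩ :=
      exists_mem_nhds_isClosed_subset (hU.mem_nhds hxU)
    set W : Set X := interior t with hW
    have hxW : x ∈ W := mem_interior_iff_mem_nhds.mpr htmem
    have hclWU : closure W ⊆ U :=
      (closure_minimal interior_subset htcl).trans htU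
    -- the indicator function
    set f : QP X Y := ⟨fun z => if z ∈ closure W then y₁ else y₀,
      quasiContinuous_indicator_closure W isOpen_interior y₀ y₁⟩ with hf
    -- a basic open set around f
    set O : Set (QP X Y) := {g | dist (g.1 x) y₁ < ε} with hO
    have hOopen : IsOpen O := by
      have hcont : Continuous fun g : QP X Y => g.1 x :=
        (continuous_apply x).comp continuous_subtype_val
      have : O = (fun g : QP X Y => g.1 x) ⁻¹' (Metric.ball y₁ ε) := by
        ext g; simp [hO, Metric.mem_ball]
      rw [this]
      exact Metric.isOpen_ball.preimage hcont
    have hfO : f ∈ O := by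
      show dist (f.1 x) y₁ < ε
      have hfx : f.1 x = y₁ := by simp [hf, subset_closure hxW]
      rw [hfx]
      simpa using hεpos
    obtain ⟨A, hAN, hfA, hAO⟩ := hN f O hOopen hfO
    have hPA : x ∈ P A := fun g hg => hAO hg
    have hA' : A ∈ N' := ⟨hAN, ⟨x, hPA⟩⟩
    set d : X := xN ⟨A, hA'⟩ with hd
    have hdPA : d ∈ P A := (⟨A, hA'⟩ : N').2.2.some_mem
    have hdU : d ∈ U := by
      apply hclWU
      by_contra hdW
      have := hdPA f hfA
      have : dist y₀ y₁ < ε := by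
        have hfd : f.1 d = y₀ := by simp [hf, hdW]
        rwa [hfd] at this
      exact absurd this (lt_irrefl _)
    exact ⟨d, hdU, ⟨⟨A, hA'⟩, rfl⟩⟩
  -- cardinality estimates
  have hDcard : Cardinal.lift.{v} #D ≤ #N := by
    have h1 : Cardinal.lift.{max u v} #D ≤ Cardinal.lift.{u} #N' := by
      rw [hD]
      exact Cardinal.mk_range_le_lift
    have h2 : #(N' : Set (Set (QP X Y))) ≤ #N :=
      Cardinal.mk_le_mk_of_subset (fun A hA => hA.1)
    calc Cardinal.lift.{v} #D = Cardinal.lift.{max u v} #D := by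
          rw [Cardinal.lift_umax.{u, v}]
      _ ≤ Cardinal.lift.{u} #N' := h1
      _ = #(N' : Set (Set (QP X Y))) := Cardinal.lift_id' _
      _ ≤ #N := h2
  -- density X ≤ ℵ₀ + #D
  have hdX : density X ≤ ℵ₀ + #D := by
    unfold density
    gcongr
    exact csInf_le (OrderBot.bddBelow _) ⟨D, hDdense, rfl⟩
  calc Cardinal.lift.{v} (density X) ≤ Cardinal.lift.{v} (ℵ₀ + #D) :=
        Cardinal.lift_le.mpr hdX
    _ = ℵ₀ + Cardinal.lift.{v} #D := by
        rw [Cardinal.lift_add, Cardinal.lift_aleph0]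
    _ ≤ ℵ₀ + #N := add_le_add le_rfl hDcard
    _ = netWeight (QP X Y) := by rw [netWeight, hNcard]
end

section
/- Let X be a topological space, f : X → ℝ a continuous function, and g : X → ℝ a quasi-continuous function. Then the pointwise product f · g, defined by (f · g)(x) = f(x)g(x), is quasi-continuous. -/
open Cardinal

universe u v w

section QuasiContinuous

variable {X Y Z : Type*} [TopologicalSpace X] [TopologicalSpace Y] [TopologicalSpace Z]

theorem Continuous.comp_quasiContinuous {φ : Y → Z} {h : X → Y} (hφ : Continuous φ)
    (hh : QuasiContinuous h) : QuasiContinuous (φ ∘ h) := by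
  intro x U hU hxU V hV hxV
  obtain ⟨G, hG, hGne, hGU, hGV⟩ := hh x U hU hxU (φ ⁻¹' V) (hV.preimage hφ) hxV
  exact ⟨G, hG, hGne, hGU, by rw [Set.image_comp]; exact Set.image_subset_iff.mpr hGV⟩

/-- Shrinking `U` to `U ∩ f ⁻¹' V₁` first makes the first coordinate land in `V₁` on all of
`G`, not just at `x`. -/
theorem Continuous.prodMk_quasiContinuous {f : X → Y} {g : X → Z} (hf : Continuous f)
    (hg : QuasiContinuous g) : QuasiContinuous fun x => (f x, g x) := by
  intro x U hU hxU W hW hxW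
  obtain ⟨V₁, V₂, hV₁, hV₂, hfx, hgx, hV₁V₂⟩ := isOpen_prod_iff.mp hW (f x) (g x) hxW
  obtain ⟨G, hG, hGne, hGU, hGV₂⟩ :=
    hg x (U ∩ f ⁻¹' V₁) (hU.inter (hV₁.preimage hf)) ⟨hxU, hfx⟩ V₂ hV₂ hgx
  refine ⟨G, hG, hGne, fun y hy => (hGU hy).1, ?_⟩
  rintro _ ⟨y, hy, rfl⟩
  exact hV₁V₂ ⟨(hGU hy).2, hGV₂ ⟨y, hy, rfl⟩⟩

end QuasiContinuous

/-- The pointwise product of a continuous and a quasi-continuous real-valued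
function is quasi-continuous. -/
theorem stmt11 (X : Type u) [TopologicalSpace X] (f g : X → ℝ) (hf : Continuous f)
    (hg : QuasiContinuous g) :
    QuasiContinuous (fun x : X => f x * g x) := by
  exact continuous_mul.comp_quasiContinuous (hf.prodMk_quasiContinuous hg)
end

section
/- Let X be a regular topological space, and let r : Y → Z be a continuous surjective open map between topological spaces. Then the image of the induced map r_* : Q_P(X,Y) → Q_P(X,Z), defined by r_*(f) = r ∘ f, is dense in Q_P(X,Z). -/
open Cardinal

universe u v w

/-!
Let `g : X → Z` be quasi-continuous and fix a basic neighbourhood of `g`, given by finitely many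
points `i ∈ I` and open sets `V i ∋ g i`. Put `W i = interior (g ⁻¹' V i)` and, for `S ⊆ I`,
`O S = ⋂ i ∈ S, W i`. Quasi-continuity of `g` puts every `x` in the closure of `O ({x} ∩ I)`;
choose `M x ⊇ {x} ∩ I` maximal with `x ∈ closure (O (M x))`. Let `G` be the open set of points of
`O (M x)` outside the closures of all `O S` with `S ⊋ M x`. For `x' ∈ G`, `x' ∈ closure (O T)`
forces `x' ∈ closure (O (M x ∪ T))`, hence `T ⊆ M x`; so `M x' = M x` by maximality, while
`x ∈ closure G`. Therefore every `f = y ∘ M` is quasi-continuous, and choosing `y S ∈ r⁻¹ (g p)`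
for some `p ∈ O S` gives `r (f i) ∈ V i`.
-/
open Set Function

theorem Continuous.comp_quasiContinuous_s13 {X Y Z : Type*} [TopologicalSpace X]
    [TopologicalSpace Y] [TopologicalSpace Z] {r : Y → Z} {f : X → Y} (hr : Continuous r)
    (hf : QuasiContinuous f) : QuasiContinuous (r ∘ f) := by
  intro x U hU hxU V hV hxV
  obtain ⟨G, hG, hGne, hGU, hGV⟩ := hf x U hU hxU (r ⁻¹' V) (hV.preimage hr) hxV
  exact ⟨G, hG, hGne, hGU, by rw [image_comp]; exact image_subset_iff.2 hGV⟩

theorem QuasiContinuous.mem_closure_interior_preimage {X Z : Type*} [TopologicalSpace X]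
    [TopologicalSpace Z] {g : X → Z} (hg : QuasiContinuous g) {V : Set Z} (hV : IsOpen V)
    {x : X} (hx : g x ∈ V) : x ∈ closure (interior (g ⁻¹' V)) := by
  refine mem_closure_iff.2 fun U hU hxU => ?_
  obtain ⟨G, hG, ⟨p, hp⟩, hGU, hGV⟩ := hg x U hU hxU V hV hx
  exact ⟨p, hGU hp, interior_maximal (image_subset_iff.1 hGV) hG hp⟩

theorem quasiContinuous_comp_of_mem_closure_interior_fiber {X ι Y : Type*} [TopologicalSpace X]
    [TopologicalSpace Y] (M : X → ι) (y : ι → Y)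
    (hM : ∀ x, x ∈ closure (interior {x' | M x' = M x})) : QuasiContinuous fun x => y (M x) := by
  intro x U hU hxU V _ hxV
  obtain ⟨p, hpU, hp⟩ := mem_closure_iff.1 (hM x) U hU hxU
  refine ⟨U ∩ interior {x' | M x' = M x}, hU.inter isOpen_interior, ⟨p, hpU, hp⟩,
    inter_subset_left, ?_⟩
  rintro _ ⟨x', ⟨-, hx'⟩, rfl⟩
  have hMx' : M x' = M x := interior_subset (s := {x' | M x' = M x}) hx'
  simpa only [hMx'] using hxV

section FiniteIntersections

variable {X ι : Type*} [TopologicalSpace X] {W : ι → Set X}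

theorem mem_closure_biInter_union [DecidableEq ι] (hW : ∀ i, IsOpen (W i)) {x : X}
    {S T : Finset ι} (hS : x ∈ ⋂ i ∈ S, W i) (hT : x ∈ closure (⋂ i ∈ T, W i)) :
    x ∈ closure (⋂ i ∈ S ∪ T, W i) := by
  rw [Finset.set_biInter_inter]
  exact (isOpen_biInter_finset fun i _ => hW i).inter_closure ⟨hS, hT⟩

theorem exists_maximal_mem_closure_biInter [Finite ι] (hW : ∀ i, IsOpen (W i))
    (A : X → Finset ι) (hA : ∀ x, x ∈ closure (⋂ i ∈ A x, W i)) :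
    ∃ M : X → Finset ι, (∀ x, A x ⊆ M x) ∧ (∀ x, x ∈ closure (⋂ i ∈ M x, W i)) ∧
      ∀ x, x ∈ closure (interior {x' | M x' = M x}) := by
  classical
  choose M hAM hM using fun x =>
    Finite.exists_le_maximal (p := fun S => x ∈ closure (⋂ i ∈ S, W i)) (hA x)
  refine ⟨M, hAM, fun x => (hM x).prop, fun x => ?_⟩
  set U := ⋂ (S : Finset ι) (_ : M x < S), (closure (⋂ i ∈ S, W i))ᶜ
  have hU : IsOpen U := isOpen_iInter_of_finite fun S =>
    isOpen_iInter_of_finite fun _ => isClosed_closure.isOpen_compl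
  have hxU : x ∈ U := mem_iInter₂.2 fun S hS => (hM x).not_prop_of_gt hS
  have hconst : U ∩ ⋂ i ∈ M x, W i ⊆ {x' | M x' = M x} := by
    rintro x' ⟨hx'U, hx'M⟩
    have hsub : ∀ T, x' ∈ closure (⋂ i ∈ T, W i) → T ⊆ M x := fun T hT => by
      by_contra hTM
      exact mem_iInter₂.1 hx'U (M x ∪ T) (left_lt_sup.2 hTM)
        (mem_closure_biInter_union hW hx'M hT)
    have hx'cl : x' ∈ closure (⋂ i ∈ M x, W i) := subset_closure hx'M
    exact (hM x').eq_of_le hx'cl (hsub _ (hM x').prop)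
  have hopen : IsOpen (U ∩ ⋂ i ∈ M x, W i) := hU.inter (isOpen_biInter_finset fun i _ => hW i)
  exact closure_mono (interior_maximal hconst hopen) (hU.inter_closure ⟨hxU, (hM x).prop⟩)

end FiniteIntersections

theorem QuasiContinuous.exists_lift_mem {X Y Z : Type*} [TopologicalSpace X]
    [TopologicalSpace Y] [TopologicalSpace Z] {r : Y → Z} (hr : Surjective r) {g : X → Z}
    (hg : QuasiContinuous g) (I : Finset X) {V : X → Set Z}
    (hV : ∀ i ∈ I, IsOpen (V i) ∧ g i ∈ V i) :
    ∃ f : X → Y, QuasiContinuous f ∧ ∀ i ∈ I, r (f i) ∈ V i := by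
  rcases isEmpty_or_nonempty X with _ | _
  · exact ⟨isEmptyElim, fun x => isEmptyElim x, fun i => isEmptyElim i⟩
  classical
  let W : I → Set X := fun i => interior (g ⁻¹' V i)
  let A : X → Finset I := fun x => if hx : x ∈ I then {⟨x, hx⟩} else ∅
  have hA : ∀ x, x ∈ closure (⋂ i ∈ A x, W i) := fun x => by
    by_cases hx : x ∈ I
    · simpa [A, W, hx] using hg.mem_closure_interior_preimage (hV x hx).1 (hV x hx).2
    · simp [A, hx]
  obtain ⟨M, hAM, hMcl, hMconst⟩ :=
    exists_maximal_mem_closure_biInter (fun _ => isOpen_interior) A hA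
  let y : Finset I → Y := fun S => surjInv hr (g (Classical.epsilon (· ∈ ⋂ i ∈ S, W i)))
  refine ⟨fun x => y (M x), quasiContinuous_comp_of_mem_closure_interior_fiber M y hMconst,
    fun i hi => ?_⟩
  have hpoint := Classical.epsilon_spec (closure_nonempty_iff.1 ⟨i, hMcl i⟩)
  have hiM : ⟨i, hi⟩ ∈ M i := hAM i (by simp [A, hi])
  simp only [y, surjInv_eq]
  exact interior_subset (s := g ⁻¹' V i) (mem_iInter₂.1 hpoint _ hiM)

theorem stmt13_general (X : Type u) (Y : Type v) (Z : Type w) [TopologicalSpace X]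
    [TopologicalSpace Y] [TopologicalSpace Z] (r : Y → Z) (hr : Continuous r)
    (hsurj : Function.Surjective r) :
    Dense {g : QP X Z | ∃ f : QP X Y, (g : X → Z) = r ∘ (f : X → Y)} := by
  rw [dense_iff_inter_open]
  rintro U hU ⟨g, hgU⟩
  obtain ⟨T, hT, rfl⟩ := isOpen_induced_iff.mp hU
  obtain ⟨I, V, hV, hIV⟩ := isOpen_pi_iff.mp hT g.1 hgU
  obtain ⟨f, hf, hfV⟩ := g.2.exists_lift_mem hsurj I hV
  exact ⟨⟨r ∘ f, hr.comp_quasiContinuous_s13 hf⟩, hIV fun i hi => hfV i hi, ⟨f, hf⟩, rfl⟩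

/-- For a regular space `X` and a continuous surjective open map `r : Y → Z`,
the image of the induced map `r_* : Q_P(X,Y) → Q_P(X,Z)`, `r_* f = r ∘ f`, is dense in
`Q_P(X,Z)`. -/
theorem stmt13 (X : Type u) (Y : Type v) (Z : Type w) [TopologicalSpace X] [RegularSpace X]
    [TopologicalSpace Y] [TopologicalSpace Z] (r : Y → Z) (hr : Continuous r)
    (hsurj : Function.Surjective r) (hopen : IsOpenMap r) :
    Dense {g : QP X Z | ∃ f : QP X Y, (g : X → Z) = r ∘ (f : X → Y)} :=
  stmt13_general X Y Z r hr hsurj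
end

section
/- Let X be a regular topological space and Y any topological space. For every x ∈ X, every nonempty closed set E ⊆ X with x ∉ E, and all points y₁, y₂ ∈ Y, there exists a quasi-continuous function f : X → Y such that f(x) = y₁ and f(E) = {y₂}. -/
open Cardinal

universe u v w

/-!
By regularity pick an open `A ∋ x` whose closure misses `E`, and let `f` be `y₁` on
`closure A` and `y₂` off it. Each point lies in the closure of an open set on which `f` is
constant: `A` for points of `closure A`, the open set `(closure A)ᶜ` for the others.
That is enough for quasi-continuity, whatever the topology of `Y`.
-/

section QuasiContinuity

variable {X Y : Type*} [TopologicalSpace X] [TopologicalSpace Y]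

theorem quasiContinuous_of_forall_mem_closure_interior_preimage {f : X → Y}
    (hf : ∀ z, z ∈ closure (interior (f ⁻¹' {f z}))) : QuasiContinuous f := by
  intro z U hU hzU V _ hzV
  obtain ⟨w, hwU, hwint⟩ := mem_closure_iff.1 (hf z) U hU hzU
  refine ⟨U ∩ interior (f ⁻¹' {f z}), hU.inter isOpen_interior, ⟨w, hwU, hwint⟩,
    Set.inter_subset_left, ?_⟩
  rintro _ ⟨v, ⟨-, hv⟩, rfl⟩
  rw [interior_subset hv]
  exact hzV

open Classical in
theorem quasiContinuous_piecewise_closure {A : Set X} (hA : IsOpen A) (y₁ y₂ : Y) :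
    QuasiContinuous ((closure A).piecewise (fun _ => y₁) fun _ => y₂) := by
  set f := (closure A).piecewise (fun _ => y₁) fun _ => y₂
  have hf_closure : ∀ w ∈ closure A, f w = y₁ := fun w hw => Set.piecewise_eq_of_mem _ _ _ hw
  have hf_compl : ∀ w ∉ closure A, f w = y₂ := fun w hw => Set.piecewise_eq_of_notMem _ _ _ hw
  refine quasiContinuous_of_forall_mem_closure_interior_preimage fun z => ?_
  by_cases hz : z ∈ closure A
  · have hA_sub : A ⊆ interior (f ⁻¹' {f z}) := hA.subset_interior_iff.2 fun w hw => by
      rw [Set.mem_preimage, hf_closure w (subset_closure hw), hf_closure z hz]; rfl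
    exact closure_mono hA_sub hz
  · have hcompl_sub : (closure A)ᶜ ⊆ interior (f ⁻¹' {f z}) :=
      isClosed_closure.isOpen_compl.subset_interior_iff.2 fun w hw => by
        rw [Set.mem_preimage, hf_compl w hw, hf_compl z hz]; rfl
    exact subset_closure (hcompl_sub hz)

end QuasiContinuity

/-- For a regular space `X`, any space `Y`, `x ∈ X`, a nonempty closed
`E ⊆ X` with `x ∉ E`, and `y₁ y₂ ∈ Y`, there is a quasi-continuous `f : X → Y` with
`f x = y₁` and `f '' E = {y₂}`. -/
theorem stmt15 (X : Type u) (Y : Type v) [TopologicalSpace X] [RegularSpace X]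
    [TopologicalSpace Y] (x : X) (E : Set X) (hE : IsClosed E) (hne : E.Nonempty)
    (hx : x ∉ E) (y₁ y₂ : Y) :
    ∃ f : X → Y, QuasiContinuous f ∧ f x = y₁ ∧ f '' E = {y₂} := by
  classical
  obtain ⟨A, ⟨hxA, hA⟩, hAE⟩ :=
    (hasBasis_opens_closure x).mem_iff.1 (hE.isOpen_compl.mem_nhds hx)
  refine ⟨(closure A).piecewise (fun _ => y₁) fun _ => y₂,
    quasiContinuous_piecewise_closure hA y₁ y₂,
    Set.piecewise_eq_of_mem _ _ _ (subset_closure hxA), ?_⟩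
  refine Set.eq_singleton_iff_nonempty_unique_mem.2 ⟨hne.image _, ?_⟩
  rintro _ ⟨w, hwE, rfl⟩
  exact Set.piecewise_eq_of_notMem _ _ _ fun hw => hAE hw hwE
end
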